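/- Let (g,·) be a pre-Lie algebra over a field K of characteristic 0, (V;ρ,μ) a representation of g, and T: V → g an O-operator, i.e. T(u)·T(v) = T(ρ(T(u))v + μ(T(v))u) for all u,v ∈ V. Define u ·^T v := ρ(T(u))v + μ(T(v))u. Then (V, ·^T) is a pre-Lie algebra (the product ·^T satisfies the pre-Lie identity), and T is a pre-Lie algebra homomorphism from (V, ·^T) to (g, ·), i.e. T(u ·^T v) = T(u)·T(v) for all u,v ∈ V. -/
import Mathlib


/-- The product `u ·^T v := ρ(T u) v + μ(T v) u` on `V` associated to a linear map
`T : V → g` and a pair of linear maps `ρ, μ : g → End(V)`. -/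
def oProd {K g V : Type*} [Field K] [AddCommGroup g] [Module K g]
    [AddCommGroup V] [Module K V]
    (ρ μ : g →ₗ[K] Module.End K V) (T : V →ₗ[K] g) (u v : V) : V :=
  ρ (T u) v + μ (T v) u

/-- If `T` is an O-operator on a pre-Lie algebra `(g,·)` associated to a
representation `(V; ρ, μ)`, then `·^T` is a pre-Lie product on `V` and `T` is a pre-Lie
algebra homomorphism from `(V, ·^T)` to `(g, ·)`. -/
theorem oOperator_gives_preLie_and_hom {K : Type*} [Field K] [CharZero K]
    {g V : Type*} [AddCommGroup g] [Module K g] [AddCommGroup V] [Module K V]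
    (mul : g →ₗ[K] g →ₗ[K] g)
    (hpre : ∀ x y z : g,
      mul (mul x y) z - mul x (mul y z) = mul (mul y x) z - mul y (mul x z))
    (ρ μ : g →ₗ[K] Module.End K V)
    (hrep₁ : ∀ x y : g, ρ (mul x y - mul y x) = ρ x * ρ y - ρ y * ρ x)
    (hrep₂ : ∀ x y : g, ρ x * μ y - μ y * ρ x = μ (mul x y) - μ y * μ x)
    (T : V →ₗ[K] g)
    (hT : ∀ u v : V, mul (T u) (T v) = T (oProd ρ μ T u v)) :
    (∀ u v w : V,
      oProd ρ μ T (oProd ρ μ T u v) w - oProd ρ μ T u (oProd ρ μ T v w)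
        = oProd ρ μ T (oProd ρ μ T v u) w - oProd ρ μ T v (oProd ρ μ T u w)) ∧
    (∀ u v : V, T (oProd ρ μ T u v) = mul (T u) (T v)) := by
  have hT' : ∀ u v : V, T (ρ (T u) v + μ (T v) u) = mul (T u) (T v) :=
    fun u v => (hT u v).symm
  constructor
  · intro u v w
    have e1 : ρ (mul (T u) (T v)) w - ρ (mul (T v) (T u)) w
        = ρ (T u) (ρ (T v) w) - ρ (T v) (ρ (T u) w) := by
      have := congrFun (congrArg (DFunLike.coe) (hrep₁ (T u) (T v))) w
      simpa [LinearMap.sub_apply, Module.End.mul_apply, map_sub] using this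
    have e2 : ρ (T u) (μ (T w) v) - μ (T w) (ρ (T u) v)
        = μ (mul (T u) (T w)) v - μ (T w) (μ (T u) v) := by
      have := congrFun (congrArg (DFunLike.coe) (hrep₂ (T u) (T w))) v
      simpa [LinearMap.sub_apply, Module.End.mul_apply] using this
    have e3 : ρ (T v) (μ (T w) u) - μ (T w) (ρ (T v) u)
        = μ (mul (T v) (T w)) u - μ (T w) (μ (T v) u) := by
      have := congrFun (congrArg (DFunLike.coe) (hrep₂ (T v) (T w))) u
      simpa [LinearMap.sub_apply, Module.End.mul_apply] using this
    simp only [oProd, map_add, LinearMap.add_apply, hT']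
    linear_combination (norm := module) e1 - e2 + e3
  · intro u v
    exact (hT u v).symm
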